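/- (Theorem 4 of the paper: the critical value is not conservative.) Fix integers n ≥ 1, K ≥ 1, fixed vectors X_1, …, X_n ∈ ℝ^K, β ∈ ℝ^K, ε > 0, finite nonempty sets 𝒱_u, 𝒱_l ⊆ ℝ^K, and α ∈ (0,1). Let q_{1−α} be the (1−α)-quantile of the statistic T*_n(β) computed from n i.i.d. Bernoulli(1/2) outcomes Y*_1, …, Y*_n (this distribution depends only on the fixed objects just listed). Then for every real c < q_{1−α}, there exist a probability space and mutually independent real random variables U_1, …, U_n on it with ℙ(U_i ≥ 0) = 1/2 for every i, such that, setting Y_i = 1{X_i β + U_i ≥ 0}, the resulting test statistic satisfies ℙ(T_n(β) ≤ c) < 1 − α. -/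

import Mathlib

open MeasureTheory ProbabilityTheory

/-- Sample upper moment `m̂_u(b,v)` computed from outcomes `y`. -/
noncomputable def muHatU {n K : ℕ} (X : Fin n → Fin K → ℝ) (b v : Fin K → ℝ)
    (y : Fin n → ℝ) : ℝ :=
  (n : ℝ)⁻¹ * ∑ i, (2 * y i - 1) *
    (if 0 ≤ (∑ j, X i j * b j) ∧ (∑ j, X i j * v j) < 0 then 1 else 0)

/-- Sample lower moment `m̂_l(b,v)` computed from outcomes `y`. -/
noncomputable def muHatL {n K : ℕ} (X : Fin n → Fin K → ℝ) (b v : Fin K → ℝ)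
    (y : Fin n → ℝ) : ℝ :=
  (n : ℝ)⁻¹ * ∑ i, (1 - 2 * y i) *
    (if (∑ j, X i j * b j) ≤ 0 ∧ 0 < (∑ j, X i j * v j) then 1 else 0)

/-- Sample variance `σ̂_u²(b,v)`. -/
noncomputable def sigHatU2 {n K : ℕ} (X : Fin n → Fin K → ℝ) (b v : Fin K → ℝ)
    (y : Fin n → ℝ) : ℝ :=
  (n : ℝ)⁻¹ * (∑ i, (if 0 ≤ (∑ j, X i j * b j) ∧ (∑ j, X i j * v j) < 0
      then (1:ℝ) else 0)) - (muHatU X b v y) ^ 2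

/-- Sample variance `σ̂_l²(b,v)`. -/
noncomputable def sigHatL2 {n K : ℕ} (X : Fin n → Fin K → ℝ) (b v : Fin K → ℝ)
    (y : Fin n → ℝ) : ℝ :=
  (n : ℝ)⁻¹ * (∑ i, (if (∑ j, X i j * b j) ≤ 0 ∧ 0 < (∑ j, X i j * v j)
      then (1:ℝ) else 0)) - (muHatL X b v y) ^ 2

/-- The test statistic `T_n(b)` computed from outcomes `y`. -/
noncomputable def Tstat {n K : ℕ} (X : Fin n → Fin K → ℝ)
    (Vu Vl : Finset (Fin K → ℝ)) (hu : Vu.Nonempty) (hl : Vl.Nonempty)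
    (ε : ℝ) (b : Fin K → ℝ) (y : Fin n → ℝ) : ℝ :=
  max 0 (max
    (Vu.sup' hu fun v =>
      Real.sqrt n * (-(muHatU X b v y)) /
        max (Real.sqrt (sigHatU2 X b v y)) ε)
    (Vl.sup' hl fun v =>
      Real.sqrt n * (-(muHatL X b v y)) /
        max (Real.sqrt (sigHatL2 X b v y)) ε))

/-!
Let `a i = X_i β` and toss `n` independent fair coins `ω i`; put `U_i = |a i| + 1` on heads and
`-(|a i| + 1)` on tails. Then `P(U_i ≥ 0) = 1/2`, and `a i + U_i ≥ 0` exactly on heads, so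
`Y_i = ω i` and `T_n(β)` has the same law as `T*_n(β)`. Below its `(1 - α)`-quantile the
distribution function of `T*_n(β)` is `< 1 - α`, since `T*_n(β) ≥ 0` makes the set defining the
quantile bounded below.
-/

open Set

lemma lt_of_lt_sInf_setOf_le {F : ℝ → ℝ} {p c : ℝ} (hp : 0 < p) (hF : ∀ x < 0, F x = 0)
    (hc : c < sInf {x | p ≤ F x}) : F c < p := by
  have hbdd : BddBelow {x | p ≤ F x} :=
    ⟨0, fun x hx => not_lt.1 fun hx0 => hp.not_ge (hF x hx0 ▸ hx)⟩
  simpa using notMem_of_lt_csInf hc hbdd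

lemma card_filter_le_div_lt_of_lt_sInf {Ω : Type*} [Fintype Ω] {T : Ω → ℝ} (hT : ∀ ω, 0 ≤ T ω)
    {N p c : ℝ} (hp : 0 < p)
    (hc : c < sInf {x | p ≤ (Finset.univ.filter fun ω => T ω ≤ x).card / N}) :
    ((Finset.univ.filter fun ω => T ω ≤ c).card : ℝ) / N < p := by
  refine lt_of_lt_sInf_setOf_le (F := fun x => (Finset.univ.filter fun ω => T ω ≤ x).card / N)
    hp (fun x hx => ?_) hc
  simp [Finset.filter_false_of_mem fun ω _ => not_le.2 (hx.trans_le (hT ω))]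

lemma Tstat_nonneg {n K : ℕ} (X : Fin n → Fin K → ℝ) (Vu Vl : Finset (Fin K → ℝ))
    (hu : Vu.Nonempty) (hl : Vl.Nonempty) (ε : ℝ) (b : Fin K → ℝ) (y : Fin n → ℝ) :
    0 ≤ Tstat X Vu Vl hu hl ε b y :=
  le_max_left _ _

def coinNoise (a : ℝ) (b : Bool) : ℝ := if b then |a| + 1 else -(|a| + 1)

lemma zero_le_add_coinNoise_iff {x a : ℝ} (hx : |x| ≤ |a|) (b : Bool) :
    0 ≤ x + coinNoise a b ↔ b = true := by
  obtain ⟨hx₁, hx₂⟩ := abs_le.1 hx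
  cases b <;> simp only [coinNoise, Bool.false_eq_true, ite_false, ite_true, iff_true,
    iff_false, not_le] <;> linarith

lemma zero_le_coinNoise_iff (a : ℝ) (b : Bool) : 0 ≤ coinNoise a b ↔ b = true := by
  simpa using zero_le_add_coinNoise_iff (x := 0) (a := a) (by simp) b

section CoinTosses

variable {ι : Type*} [Fintype ι]

lemma uniformOn_univ_eq_pi :
    (uniformOn univ : Measure (ι → Bool)) = Measure.pi fun _ => uniformOn univ := by
  have := uniformOn_pi (ι := ι) (f := fun _ => (univ : Set Bool))
  rwa [pi_univ] at this

lemma iIndepFun_uniformOn_univ {β : Type*} [MeasurableSpace β] (g : ι → Bool → β) :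
    iIndepFun (fun i (ω : ι → Bool) => g i (ω i)) (uniformOn univ) := by
  rw [uniformOn_univ_eq_pi]
  exact iIndepFun_pi fun i => (measurable_of_finite (g i)).aemeasurable

lemma uniformOn_univ_eval_eq_true (i : ι) :
    (uniformOn univ : Measure (ι → Bool)) {ω | ω i = true} = 1 / 2 := by
  rw [uniformOn_univ_eq_pi]
  have := (measurePreserving_eval (fun _ : ι => (uniformOn univ : Measure Bool)) i).measure_preimage
    (s := ({true} : Set Bool)) (measurableSet_singleton _).nullMeasurableSet
  rw [show {ω : ι → Bool | ω i = true} = Function.eval i ⁻¹' ({true} : Set Bool) from rfl, this,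
    uniformOn_univ]
  simp

lemma toReal_uniformOn_univ_setOf [DecidableEq ι] (p : (ι → Bool) → Prop) [DecidablePred p] :
    ((uniformOn univ : Measure (ι → Bool)) {ω | p ω}).toReal
      = (Finset.univ.filter p).card / 2 ^ Fintype.card ι := by
  rw [uniformOn_univ, ← Finset.coe_filter_univ, Measure.count_apply_finset]
  simp

end CoinTosses

theorem theorem4_not_conservative_general
    {n K : ℕ}
    (X : Fin n → Fin K → ℝ) (β : Fin K → ℝ)
    (ε : ℝ)
    (Vu Vl : Finset (Fin K → ℝ)) (hu : Vu.Nonempty) (hl : Vl.Nonempty)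
    (α : ℝ) (hα : α ∈ Set.Ioo (0 : ℝ) 1)
    (q : ℝ)
    (hq : q = sInf {c : ℝ | 1 - α ≤
      ((Finset.univ.filter (fun s : Fin n → Bool =>
          Tstat X Vu Vl hu hl ε β (fun i => if s i then 1 else 0) ≤ c)).card : ℝ)
        / 2 ^ n})
    (c : ℝ) (hc : c < q) :
    ∃ (Ω : Type) (_ : MeasurableSpace Ω) (P : Measure Ω),
      IsProbabilityMeasure P ∧
      ∃ U : Fin n → Ω → ℝ,
        (∀ i, Measurable (U i)) ∧
        iIndepFun U P ∧
        (∀ i, P {ω | 0 ≤ U i ω} = 1/2) ∧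
        (P {ω | Tstat X Vu Vl hu hl ε β
            (fun i => if 0 ≤ (∑ j, X i j * β j) + U i ω then 1 else 0) ≤ c}).toReal
          < 1 - α := by
  let U : Fin n → (Fin n → Bool) → ℝ := fun i ω => coinNoise (∑ j, X i j * β j) (ω i)
  have hY (ω : Fin n → Bool) : (fun i => if 0 ≤ (∑ j, X i j * β j) + U i ω then (1 : ℝ) else 0)
      = fun i => if ω i then 1 else 0 := by
    simp only [U, zero_le_add_coinNoise_iff le_rfl]
  have hhalf (i : Fin n) : uniformOn univ {ω | 0 ≤ U i ω} = 1 / 2 := by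
    simpa only [U, zero_le_coinNoise_iff] using uniformOn_univ_eval_eq_true i
  have hcdf := card_filter_le_div_lt_of_lt_sInf (fun _ => Tstat_nonneg ..) (sub_pos.2 hα.2)
    (hq ▸ hc)
  refine ⟨Fin n → Bool, inferInstance, uniformOn univ, inferInstance, U,
    fun i => measurable_of_finite _, iIndepFun_uniformOn_univ _, hhalf, ?_⟩
  simpa only [hY, toReal_uniformOn_univ_setOf, Fintype.card_fun, Fintype.card_bool,
    Fintype.card_fin] using hcdf

/-- Theorem 4: the critical value is not conservative.  For any `c` strictly below the
`(1−α)`-quantile `q_{1−α}` of `T*_n(β)` (whose distribution is that of the statistic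
computed from `n` i.i.d. Bernoulli(1/2) outcomes), there is a probability space and
mutually independent random variables `U₁, …, U_n` with `P(Uᵢ ≥ 0) = 1/2` under which
`P(T_n(β) ≤ c) < 1 − α`. -/
theorem theorem4_not_conservative
    {n K : ℕ} (hn : 1 ≤ n) (hK : 1 ≤ K)
    (X : Fin n → Fin K → ℝ) (β : Fin K → ℝ)
    (ε : ℝ) (hε : 0 < ε)
    (Vu Vl : Finset (Fin K → ℝ)) (hu : Vu.Nonempty) (hl : Vl.Nonempty)
    (α : ℝ) (hα : α ∈ Set.Ioo (0 : ℝ) 1)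
    (q : ℝ)
    (hq : q = sInf {c : ℝ | 1 - α ≤
      ((Finset.univ.filter (fun s : Fin n → Bool =>
          Tstat X Vu Vl hu hl ε β (fun i => if s i then 1 else 0) ≤ c)).card : ℝ)
        / 2 ^ n})
    (c : ℝ) (hc : c < q) :
    ∃ (Ω : Type) (_ : MeasurableSpace Ω) (P : Measure Ω),
      IsProbabilityMeasure P ∧
      ∃ U : Fin n → Ω → ℝ,
        (∀ i, Measurable (U i)) ∧
        iIndepFun U P ∧
        (∀ i, P {ω | 0 ≤ U i ω} = 1/2) ∧
        (P {ω | Tstat X Vu Vl hu hl ε β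
            (fun i => if 0 ≤ (∑ j, X i j * β j) + U i ω then 1 else 0) ≤ c}).toReal
          < 1 - α :=
  theorem4_not_conservative_general X β ε Vu Vl hu hl α hα q hq c hc
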